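/- For singleton product families, the family-based semantics agrees with the product-based semantics: if environments ζ (state-family) and η (state-product) are related, i.e. (s,{p}) ∈ ζ(X) iff (s,p) ∈ η(X) for all X, then for every μL'f formula φ', state s, and product p, (s,{p}) ∈ ⟦φ'⟧'_F(ζ) if and only if (s,p) ∈ ⟦fm(φ')⟧_F(η). -/

import Mathlib

namespace SPLmu

/-- A feature transition system: `theta s a t` is the feature expression
(identified with the set of products satisfying it) guarding the transition. -/
structure FTS (S A P : Type) where
  theta : S → A → S → Set P
  init : S

/-- A labeled transition system. -/
structure LTS (S A : Type) where
  trans : S → A → S → Prop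
  init : S

/-- Projection of an FTS onto a product. -/
def FTS.proj {S A P : Type} (F : FTS S A P) (p : P) : LTS S A :=
  ⟨fun s a t => p ∈ F.theta s a t, F.init⟩

/-- Knaster–Tarski least (pre)fixpoint. -/
def slfp {α : Type} (f : Set α → Set α) : Set α := ⋂₀ {V | f V ⊆ V}

/-- Knaster–Tarski greatest (post)fixpoint. -/
def sgfp {α : Type} (f : Set α → Set α) : Set α := ⋃₀ {V | V ⊆ f V}

/-- The modal mu-calculus μL. -/
inductive MuL (A X : Type) : Type where
  | bot | top
  | neg : MuL A X → MuL A X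
  | or  : MuL A X → MuL A X → MuL A X
  | and : MuL A X → MuL A X → MuL A X
  | dia : A → MuL A X → MuL A X
  | box : A → MuL A X → MuL A X
  | var : X → MuL A X
  | mu  : X → MuL A X → MuL A X
  | nu  : X → MuL A X → MuL A X

/-- The feature mu-calculus μLf (also used as the syntax of μL'f, whose
modality ⟪a|χ⟫ corresponds to `dia`; the translation `fm` is then the identity). -/
inductive MuLf (A X P : Type) : Type where
  | bot | top
  | neg : MuLf A X P → MuLf A X P
  | or  : MuLf A X P → MuLf A X P → MuLf A X P
  | and : MuLf A X P → MuLf A X P → MuLf A X P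
  | dia : A → Set P → MuLf A X P → MuLf A X P
  | box : A → Set P → MuLf A X P → MuLf A X P
  | var : X → MuLf A X P
  | mu  : X → MuLf A X P → MuLf A X P
  | nu  : X → MuLf A X P → MuLf A X P

variable {S A X P : Type}

/-- Standard μL semantics over an LTS. -/
def MuL.sem [DecidableEq X] (L : LTS S A) : MuL A X → (X → Set S) → Set S
  | .bot, _ => ∅
  | .top, _ => Set.univ
  | .neg φ, ε => (MuL.sem L φ ε)ᶜ
  | .or φ ψ, ε => MuL.sem L φ ε ∪ MuL.sem L ψ ε
  | .and φ ψ, ε => MuL.sem L φ ε ∩ MuL.sem L ψ ε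
  | .dia a φ, ε => {s | ∃ t, L.trans s a t ∧ t ∈ MuL.sem L φ ε}
  | .box a φ, ε => {s | ∀ t, L.trans s a t → t ∈ MuL.sem L φ ε}
  | .var x, ε => ε x
  | .mu x φ, ε => slfp (fun V => MuL.sem L φ (Function.update ε x V))
  | .nu x φ, ε => sgfp (fun V => MuL.sem L φ (Function.update ε x V))

/-- Product-based μLf semantics over an FTS (sets of state-product pairs). -/
def MuLf.sem [DecidableEq X] (F : FTS S A P) : MuLf A X P → (X → Set (S × P)) → Set (S × P)
  | .bot, _ => ∅
  | .top, _ => Set.univ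
  | .neg φ, η => (MuLf.sem F φ η)ᶜ
  | .or φ ψ, η => MuLf.sem F φ η ∪ MuLf.sem F ψ η
  | .and φ ψ, η => MuLf.sem F φ η ∩ MuLf.sem F ψ η
  | .dia a χ φ, η =>
      {sp | sp.2 ∈ χ ∧ ∃ t, sp.2 ∈ F.theta sp.1 a t ∧ (t, sp.2) ∈ MuLf.sem F φ η}
  | .box a χ φ, η =>
      {sp | sp.2 ∈ χ → ∀ t, sp.2 ∈ F.theta sp.1 a t → (t, sp.2) ∈ MuLf.sem F φ η}
  | .var x, η => η x
  | .mu x φ, η => slfp (fun V => MuLf.sem F φ (Function.update η x V))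
  | .nu x φ, η => sgfp (fun V => MuLf.sem F φ (Function.update η x V))

/-- Family-based μL'f semantics over an FTS (sets of state-family pairs);
here `dia` plays the role of the family modality ⟪a|χ⟫. -/
def MuLf.fsem [DecidableEq X] (F : FTS S A P) :
    MuLf A X P → (X → Set (S × Set P)) → Set (S × Set P)
  | .bot, _ => ∅
  | .top, _ => Set.univ
  | .neg φ, ζ => (MuLf.fsem F φ ζ)ᶜ
  | .or φ ψ, ζ => MuLf.fsem F φ ζ ∪ MuLf.fsem F ψ ζ
  | .and φ ψ, ζ => MuLf.fsem F φ ζ ∩ MuLf.fsem F ψ ζ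
  | .dia a χ φ, ζ =>
      {sP | sP.2 ⊆ χ ∧ ∃ t, sP.2 ⊆ F.theta sP.1 a t ∧
        (t, sP.2 ∩ χ ∩ F.theta sP.1 a t) ∈ MuLf.fsem F φ ζ}
  | .box a χ φ, ζ =>
      {sP | (sP.2 ∩ χ).Nonempty → ∀ t, (sP.2 ∩ χ ∩ F.theta sP.1 a t).Nonempty →
        (t, sP.2 ∩ χ ∩ F.theta sP.1 a t) ∈ MuLf.fsem F φ ζ}
  | .var x, ζ => ζ x
  | .mu x φ, ζ => slfp (fun W => MuLf.fsem F φ (Function.update ζ x W))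
  | .nu x φ, ζ => sgfp (fun W => MuLf.fsem F φ (Function.update ζ x W))

-- The translation sm : μLf × 𝒫 → μL.
open Classical in
noncomputable def MuLf.sm : MuLf A X P → P → MuL A X
  | .bot, _ => .bot
  | .top, _ => .top
  | .neg φ, p => .neg (MuLf.sm φ p)
  | .or φ ψ, p => .or (MuLf.sm φ p) (MuLf.sm ψ p)
  | .and φ ψ, p => .and (MuLf.sm φ p) (MuLf.sm ψ p)
  | .dia a χ φ, p => if p ∈ χ then .dia a (MuLf.sm φ p) else .bot
  | .box a χ φ, p => if p ∈ χ then .box a (MuLf.sm φ p) else .top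
  | .var x, _ => .var x
  | .mu x φ, p => .mu x (MuLf.sm φ p)
  | .nu x φ, p => .nu x (MuLf.sm φ p)

/-- Free variables of a μLf formula. -/
def MuLf.fv : MuLf A X P → Set X
  | .bot => ∅
  | .top => ∅
  | .neg φ => MuLf.fv φ
  | .or φ ψ => MuLf.fv φ ∪ MuLf.fv ψ
  | .and φ ψ => MuLf.fv φ ∪ MuLf.fv ψ
  | .dia _ _ φ => MuLf.fv φ
  | .box _ _ φ => MuLf.fv φ
  | .var x => {x}
  | .mu x φ => MuLf.fv φ \ {x}
  | .nu x φ => MuLf.fv φ \ {x}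

/-- A μLf formula is closed if it has no free variables. -/
def MuLf.closed (φ : MuLf A X P) : Prop := MuLf.fv φ = ∅

/-- Negation-free μLf formulas. -/
def MuLf.negFree : MuLf A X P → Prop
  | .bot => True
  | .top => True
  | .neg _ => False
  | .or φ ψ => MuLf.negFree φ ∧ MuLf.negFree ψ
  | .and φ ψ => MuLf.negFree φ ∧ MuLf.negFree ψ
  | .dia _ _ φ => MuLf.negFree φ
  | .box _ _ φ => MuLf.negFree φ
  | .var _ => True
  | .mu _ φ => MuLf.negFree φ
  | .nu _ φ => MuLf.negFree φ

/-- Diamond-free μLf formulas (no ⟨a|χ⟩ / ⟪a|χ⟫). -/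
def MuLf.diaFree : MuLf A X P → Prop
  | .bot => True
  | .top => True
  | .neg φ => MuLf.diaFree φ
  | .or φ ψ => MuLf.diaFree φ ∧ MuLf.diaFree ψ
  | .and φ ψ => MuLf.diaFree φ ∧ MuLf.diaFree ψ
  | .dia _ _ _ => False
  | .box _ _ φ => MuLf.diaFree φ
  | .var _ => True
  | .mu _ φ => MuLf.diaFree φ
  | .nu _ φ => MuLf.diaFree φ

mutual
/-- All free occurrences of `x` are under an even number of negations. -/
def MuLf.posIn (x : X) : MuLf A X P → Prop
  | .bot => True
  | .top => True
  | .neg φ => MuLf.negOcc x φ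
  | .or φ ψ => MuLf.posIn x φ ∧ MuLf.posIn x ψ
  | .and φ ψ => MuLf.posIn x φ ∧ MuLf.posIn x ψ
  | .dia _ _ φ => MuLf.posIn x φ
  | .box _ _ φ => MuLf.posIn x φ
  | .var _ => True
  | .mu y φ => y = x ∨ MuLf.posIn x φ
  | .nu y φ => y = x ∨ MuLf.posIn x φ

/-- All free occurrences of `x` are under an odd number of negations. -/
def MuLf.negOcc (x : X) : MuLf A X P → Prop
  | .bot => True
  | .top => True
  | .neg φ => MuLf.posIn x φ
  | .or φ ψ => MuLf.negOcc x φ ∧ MuLf.negOcc x ψ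
  | .and φ ψ => MuLf.negOcc x φ ∧ MuLf.negOcc x ψ
  | .dia _ _ φ => MuLf.negOcc x φ
  | .box _ _ φ => MuLf.negOcc x φ
  | .var y => y ≠ x
  | .mu y φ => y = x ∨ MuLf.negOcc x φ
  | .nu y φ => y = x ∨ MuLf.negOcc x φ
end

/-- Well-formedness: fixpoint-bound variables occur positively. -/
def MuLf.wf : MuLf A X P → Prop
  | .bot => True
  | .top => True
  | .neg φ => MuLf.wf φ
  | .or φ ψ => MuLf.wf φ ∧ MuLf.wf ψ
  | .and φ ψ => MuLf.wf φ ∧ MuLf.wf ψ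
  | .dia _ _ φ => MuLf.wf φ
  | .box _ _ φ => MuLf.wf φ
  | .var _ => True
  | .mu x φ => MuLf.posIn x φ ∧ MuLf.wf φ
  | .nu x φ => MuLf.posIn x φ ∧ MuLf.wf φ

/-- Substitution φ[¬X/X] of ¬X for the free occurrences of X. -/
def MuLf.substNegVar [DecidableEq X] (x : X) : MuLf A X P → MuLf A X P
  | .bot => .bot
  | .top => .top
  | .neg φ => .neg (MuLf.substNegVar x φ)
  | .or φ ψ => .or (MuLf.substNegVar x φ) (MuLf.substNegVar x ψ)
  | .and φ ψ => .and (MuLf.substNegVar x φ) (MuLf.substNegVar x ψ)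
  | .dia a χ φ => .dia a χ (MuLf.substNegVar x φ)
  | .box a χ φ => .box a χ (MuLf.substNegVar x φ)
  | .var y => if y = x then .neg (.var y) else .var y
  | .mu y φ => if y = x then .mu y φ else .mu y (MuLf.substNegVar x φ)
  | .nu y φ => if y = x then .nu y φ else .nu y (MuLf.substNegVar x φ)

/-- Projection from state-family sets to state-product sets. -/
def fp {S P : Type} (W : Set (S × Set P)) : Set (S × P) :=
  {sp | ∃ Pf : Set P, (sp.1, Pf) ∈ W ∧ sp.2 ∈ Pf}

/-!
Pairs `(s, {p})` form the range of the injective map `singletonFamily`, and pulling the family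
semantics back along it gives the product semantics. For the modalities this is because
`{p} ∩ χ ∩ θ` is either `{p}` or empty. For the fixpoints, preimages under an injective map
commute with Knaster–Tarski fixpoints: a pre-fixpoint `V` downstairs lifts to the pre-fixpoint
`(e '' Vᶜ)ᶜ` upstairs, and a post-fixpoint `V` to the post-fixpoint `e '' V`.
-/

section Fixpoints

variable {α β : Type} {e : β → α} {f : Set α → Set α} {g : Set β → Set β}

theorem preimage_slfp_of_injective (he : e.Injective) (hfg : ∀ W, e ⁻¹' f W = g (e ⁻¹' W)) :
    e ⁻¹' slfp f = slfp g := by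
  ext b
  simp only [slfp, Set.mem_preimage, Set.mem_sInter]
  constructor
  · intro hb V hV
    have hlift : e ⁻¹' (e '' Vᶜ)ᶜ = V := by
      rw [Set.preimage_compl, he.preimage_image, compl_compl]
    have hpre : f (e '' Vᶜ)ᶜ ⊆ (e '' Vᶜ)ᶜ := by
      rintro _ ha ⟨c, hcV, rfl⟩
      exact hcV (hV (by rwa [← hlift, ← hfg]))
    rw [← hlift]
    exact hb _ hpre
  · intro hb W hW
    exact hb (e ⁻¹' W) ((hfg W).symm.trans_subset (Set.preimage_mono hW))

theorem preimage_sgfp_of_injective (he : e.Injective) (hfg : ∀ W, e ⁻¹' f W = g (e ⁻¹' W)) :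
    e ⁻¹' sgfp f = sgfp g := by
  ext b
  simp only [sgfp, Set.mem_preimage, Set.mem_sUnion]
  constructor
  · rintro ⟨W, hW, hbW⟩
    exact ⟨e ⁻¹' W, (Set.preimage_mono hW).trans_eq (hfg W), hbW⟩
  · rintro ⟨V, hV, hbV⟩
    refine ⟨e '' V, ?_, Set.mem_image_of_mem e hbV⟩
    rintro _ ⟨c, hcV, rfl⟩
    have hc := hV hcV
    rwa [← he.preimage_image V, ← hfg] at hc

end Fixpoints

def singletonFamily : S × P → S × Set P := Prod.map id singleton

@[simp]
lemma singletonFamily_apply (s : S) (p : P) : singletonFamily (s, p) = (s, {p}) :=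
  rfl

lemma singletonFamily_injective : (singletonFamily : S × P → S × Set P).Injective :=
  Function.injective_id.prodMap Set.singleton_injective

theorem preimage_singletonFamily_fsem [DecidableEq X] (F : FTS S A P) (φ : MuLf A X P)
    (ζ : X → Set (S × Set P)) :
    singletonFamily ⁻¹' φ.fsem F ζ = φ.sem F (Set.preimage singletonFamily ∘ ζ) := by
  induction φ generalizing ζ with
  | bot => rfl
  | top => rfl
  | neg φ ih => rw [MuLf.fsem, MuLf.sem, Set.preimage_compl, ih]
  | or φ ψ ihφ ihψ => rw [MuLf.fsem, MuLf.sem, Set.preimage_union, ihφ, ihψ]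
  | and φ ψ ihφ ihψ => rw [MuLf.fsem, MuLf.sem, Set.preimage_inter, ihφ, ihψ]
  | dia a χ φ ih =>
    ext ⟨s, p⟩
    simp only [MuLf.fsem, MuLf.sem, Set.mem_preimage, Set.mem_ofPred_eq, ← ih,
      singletonFamily_apply, Set.singleton_subset_iff, Set.inter_assoc]
    refine and_congr_right fun hχ => exists_congr fun t => and_congr_right fun hθ => ?_
    rw [Set.singleton_inter_of_mem (Set.mem_inter hχ hθ)]
  | box a χ φ ih =>
    ext ⟨s, p⟩
    simp only [MuLf.fsem, MuLf.sem, Set.mem_preimage, Set.mem_ofPred_eq, ← ih,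
      singletonFamily_apply, Set.inter_assoc, Set.singleton_inter_nonempty]
    refine imp_congr_right fun hχ => forall_congr' fun t => ?_
    constructor
    · intro h hθ
      rw [← Set.singleton_inter_of_mem (Set.mem_inter hχ hθ)]
      exact h ⟨hχ, hθ⟩
    · intro h hχθ
      rw [Set.singleton_inter_of_mem hχθ]
      exact h hχθ.2
  | var x => rfl
  | mu x φ ih =>
    refine preimage_slfp_of_injective singletonFamily_injective fun W => ?_
    rw [ih, Function.comp_update]
  | nu x φ ih =>
    refine preimage_sgfp_of_injective singletonFamily_injective fun W => ?_
    rw [ih, Function.comp_update]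

/-- for singleton families, the family-based semantics of μL'f agrees
with the product-based semantics of μLf (the translation fm is the identity on our
shared syntax, replacing ⟪a|χ⟫ by ⟨a|χ⟩). -/
theorem stmt4 {S A X P : Type} [DecidableEq X] (F : FTS S A P)
    (zeta : X → Set (S × Set P)) (eta : X → Set (S × P))
    (hrel : ∀ (x : X) (s : S) (p : P), (s, ({p} : Set P)) ∈ zeta x ↔ (s, p) ∈ eta x)
    (phi : MuLf A X P) (s : S) (p : P) :
    (s, ({p} : Set P)) ∈ MuLf.fsem F phi zeta ↔ (s, p) ∈ MuLf.sem F phi eta := by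
  have heta : eta = Set.preimage singletonFamily ∘ zeta :=
    funext fun x => Set.ext fun sp => (hrel x sp.1 sp.2).symm
  rw [heta, ← preimage_singletonFamily_fsem]
  rfl

end SPLmu
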